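/- Let H=(V,E) be a hypergraph and H'=(V',E') a shadow of H such that e_i ∩ e_j ⊆ V' for all distinct edges e_i, e_j of H. If the maximal ideal p_V is an associated prime of J(H)^2, then the maximal ideal p_{V'} is an associated prime of J(H')^2. -/

import Mathlib

open MvPolynomial

noncomputable section

/-- A finite simple hypergraph on a vertex set `V`: edges are nonempty subsets of `V`
forming an antichain (a clutter). -/
structure FinHypergraph (σ : Type*) where
  V : Finset σ
  E : Finset (Finset σ)
  edge_sub : ∀ e ∈ E, e ⊆ V
  edge_nonempty : ∀ e ∈ E, e.Nonempty
  simple : ∀ e ∈ E, ∀ f ∈ E, e ⊆ f → e = f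

/-- The prime ideal generated by the variables indexed by `e`. -/
def primeOf {σ : Type*} (K : Type*) [Field K] (e : Finset σ) : Ideal (MvPolynomial σ K) :=
  Ideal.span ((fun i => (X i : MvPolynomial σ K)) '' e)

/-- The cover ideal of a set of edges: the intersection of the edge primes. -/
def coverIdeal {σ : Type*} (K : Type*) [Field K] (E : Finset (Finset σ)) :
    Ideal (MvPolynomial σ K) :=
  ⨅ e ∈ E, primeOf K e

/-- The squarefree monomial supported on `T`. -/
def xU {σ : Type*} (K : Type*) [Field K] (T : Finset σ) : MvPolynomial σ K :=
  ∏ i ∈ T, X i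
/-- `T` is a vertex cover of the edge set `E`. -/
def IsCover {σ : Type*} (E : Finset (Finset σ)) (T : Finset σ) : Prop :=
  ∀ e ∈ E, ∃ v ∈ e, v ∈ T

/-- `T` is a minimal vertex cover of the edge set `E`. -/
def IsMinimalCover {σ : Type*} (E : Finset (Finset σ)) (T : Finset σ) : Prop :=
  IsCover E T ∧ ∀ T' ⊂ T, ¬ IsCover E T'

/-- `m` is a minimal monomial generator of the monomial ideal `I`: it lies in `I`, and
every divisor of `m` lying in `I` is associated to `m`. -/
def IsMinMonGen {σ K : Type*} [Field K] (I : Ideal (MvPolynomial σ K))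
    (m : MvPolynomial σ K) : Prop :=
  m ∈ I ∧ ∀ d : MvPolynomial σ K, d ∣ m → d ∈ I → Associated d m

/-- `(V', E')` is a shadow of the hypergraph `H`. -/
def IsShadow {σ : Type*} [DecidableEq σ] (H : FinHypergraph σ) (V' : Finset σ) (E' : Finset (Finset σ)) : Prop :=
  V' ⊆ H.V ∧ (∀ e ∈ E', e ⊆ V') ∧ (∀ e ∈ E', e.Nonempty) ∧
    (∀ e ∈ E', ∀ f ∈ E', e ⊆ f → e = f) ∧
    E'.card = H.E.card ∧ ∀ e ∈ H.E, e ∩ V' ∈ E'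

/-- The cover ideal of a hypergraph on vertex set `V'` (edges `E'`, subsets of `V'`),
as an ideal of the small polynomial ring `K[V']`. -/
def smallCover {σ : Type*} [DecidableEq σ] (K : Type*) [Field K] (V' : Finset σ)
    (E' : Finset (Finset σ)) : Ideal (MvPolynomial {x : σ // x ∈ V'} K) :=
  ⨅ e ∈ E', primeOf K (e.subtype (· ∈ V'))

/-- `(V', E')` is an odd cycle graph `C_{2n+1}` for some positive `n`. -/
def IsOddCycle {σ : Type*} [DecidableEq σ] (V' : Finset σ) (E' : Finset (Finset σ)) : Prop :=
  ∃ n : ℕ, 0 < n ∧ ∃ f : Fin (2 * n + 1) → σ, Function.Injective f ∧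
    V' = Finset.univ.image f ∧ E' = Finset.univ.image (fun i => ({f i, f (i + 1)} : Finset σ))

/-!
A monomial `x^m` lies in `J(E)²` exactly when `m` dominates the sum of two vertex covers, and the
maximal ideal is associated to `J(E)²` exactly when some monomial outside `J(E)²` is pushed into it
by every variable; such a socle monomial can be taken squarefree, `x^A`. If `H` has at least two
edges, every vertex `u` of `A` lies on two edges: otherwise, writing `x_u x^A` through two covers
and trading `u` for another vertex of `A` on its only edge gives two disjoint covers inside `A`. As
distinct edges meet inside `V'`, this gives `A ⊆ V'`, and a similar exchange shows that `e ↦ e ∩ V'`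
is injective, so the edges of `H'` are exactly the traces `e ∩ V'` and `x^A` is a socle monomial
for `H'`. If `H` has a single edge `e`, then `V ⊆ e` and any one vertex of `e ∩ V'` works.
-/

open Finsupp (toMultiset)

section

variable {τ K : Type*} [Field K]

-- Monomials are indexed by multisets of variables: `CoverSq E m` means `x^m ∈ J(E)²`.
def CoverSq (E : Finset (Finset τ)) (m : Multiset τ) : Prop :=
  ∃ C D : Finset τ, IsCover E C ∧ IsCover E D ∧ C.val + D.val ≤ m

def IsSocleMonomial (E : Finset (Finset τ)) (W : Finset τ) (m : Multiset τ) : Prop :=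
  ¬ CoverSq E m ∧ ∀ i ∈ W, CoverSq E (i ::ₘ m)

def coverExponents (E : Finset (Finset τ)) : Set (τ →₀ ℕ) := {u | IsCover E u.support}

theorem IsCover.mono {E : Finset (Finset τ)} {C D : Finset τ} (hC : IsCover E C) (hCD : C ⊆ D) :
    IsCover E D := fun e he => (hC e he).imp fun _ ⟨hve, hvC⟩ => ⟨hve, hCD hvC⟩

theorem isCover_singleton {e C : Finset τ} : IsCover {e} C ↔ ∃ v ∈ e, v ∈ C := by
  simp [IsCover]

theorem coverSq_mono (E : Finset (Finset τ)) : Monotone (CoverSq E) :=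
  fun _ _ hmn ⟨C, D, hC, hD, hle⟩ => ⟨C, D, hC, hD, hle.trans hmn⟩

theorem IsSocleMonomial.mono {E : Finset (Finset τ)} {W W' : Finset τ} {m : Multiset τ}
    (h : IsSocleMonomial E W m) (hW : W' ⊆ W) : IsSocleMonomial E W' m :=
  ⟨h.1, fun i hi => h.2 i (hW hi)⟩

theorem IsSocleMonomial.nonempty {E : Finset (Finset τ)} {W : Finset τ} {m : Multiset τ}
    (h : IsSocleMonomial E W m) : E.Nonempty := by
  by_contra hE
  rw [Finset.not_nonempty_iff_eq_empty] at hE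
  subst hE
  exact h.1 ⟨∅, ∅, fun _ he => absurd he (Finset.notMem_empty _),
    fun _ he => absurd he (Finset.notMem_empty _), by simp⟩

theorem isSocleMonomial_singleton {e W : Finset τ} (hW : W ⊆ e) {w : τ} (hw : w ∈ e) :
    IsSocleMonomial {e} W ({w} : Finset τ).val := by
  refine ⟨fun ⟨C, D, hC, hD, hle⟩ => ?_, fun i hi => ⟨{w}, {i}, ?_, ?_, ?_⟩⟩
  · obtain ⟨x, -, hx⟩ := isCover_singleton.mp hC
    obtain ⟨y, -, hy⟩ := isCover_singleton.mp hD
    have hcard := Multiset.card_le_card hle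
    simp only [Multiset.card_add, Finset.card_val, Finset.singleton_val,
      Multiset.card_singleton] at hcard
    have := Finset.card_pos.mpr ⟨x, hx⟩
    have := Finset.card_pos.mpr ⟨y, hy⟩
    omega
  · exact isCover_singleton.mpr ⟨w, hw, Finset.mem_singleton_self w⟩
  · exact isCover_singleton.mpr ⟨i, hW hi, Finset.mem_singleton_self i⟩
  · exact (Multiset.cons_swap w i 0).le

theorem mem_coverIdeal_iff {E : Finset (Finset τ)} {f : MvPolynomial τ K} :
    f ∈ coverIdeal K E ↔ ∀ u ∈ f.support, IsCover E u.support := by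
  simp only [coverIdeal, primeOf, Submodule.mem_iInf, mem_ideal_span_X_image, IsCover,
    Finset.mem_coe, Finsupp.mem_support_iff]
  exact ⟨fun h u hu e he => h e he u hu, fun h e he u hu => h u hu e he⟩

theorem coverIdeal_eq_span (E : Finset (Finset τ)) :
    coverIdeal K E = Ideal.span ((monomial · (1 : K)) '' coverExponents E) := by
  ext f
  rw [mem_coverIdeal_iff, mem_ideal_span_monomial_image]
  exact ⟨fun h u hu => ⟨u, h u hu, le_rfl⟩,
    fun h u hu => let ⟨_, hw, hwu⟩ := h u hu; hw.mono (Finsupp.support_mono hwu)⟩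

open Pointwise in
theorem span_monomial_image_sq (S : Set (τ →₀ ℕ)) :
    Ideal.span ((monomial · (1 : K)) '' S) ^ 2 = Ideal.span ((monomial · (1 : K)) '' (S + S)) := by
  rw [sq, Ideal.span_mul_span', ← Set.image2_mul, ← Set.image2_add, Set.image_image2,
    Set.image2_image_left, Set.image2_image_right]
  simp only [monomial_mul, one_mul]

theorem mem_colon_bot_quotient_mk_iff {R : Type*} [CommRing R] {I : Ideal R} {f r : R} :
    r ∈ Submodule.colon (⊥ : Submodule R (R ⧸ I)) {Ideal.Quotient.mk I f} ↔ r * f ∈ I := by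
  rw [Submodule.mem_colon_singleton, Submodule.mem_bot, ← Ideal.Quotient.eq_zero_iff_mem]
  rfl

theorem primeOf_univ_eq_ker [Fintype τ] :
    primeOf K (Finset.univ : Finset τ) = RingHom.ker (constantCoeff : MvPolynomial τ K →+* K) := by
  ext r
  simp only [primeOf, mem_ideal_span_X_image, Finset.coe_univ, Set.mem_univ, true_and,
    RingHom.mem_ker, constantCoeff_eq]
  constructor
  · intro h
    by_contra h0
    obtain ⟨i, hi⟩ := h 0 (mem_support_iff.mpr h0)
    exact hi rfl
  · intro h u hu
    by_contra! hu0
    exact mem_support_iff.mp hu (by rwa [show u = 0 from Finsupp.ext hu0])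

theorem exists_not_and_cons_of_add_replicate {Q : Multiset τ → Prop} {m : Multiset τ}
    (hm : ¬ Q m) (i : τ) {k : ℕ} (hk : Q (m + Multiset.replicate k i)) :
    ∃ n, ¬ Q (m + Multiset.replicate n i) ∧ Q (i ::ₘ (m + Multiset.replicate n i)) := by
  induction k with
  | zero => exact absurd (by simpa using hk) hm
  | succ k ih =>
    by_cases h : Q (m + Multiset.replicate k i)
    · exact ih h
    · exact ⟨k, h, by rwa [Multiset.replicate_succ, Multiset.add_cons] at hk⟩

theorem exists_not_and_forall_cons {Q : Multiset τ → Prop} (hQ : Monotone Q) {m₀ : Multiset τ}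
    (hm₀ : ¬ Q m₀) (V : Finset τ) (hV : ∀ i ∈ V, ∃ k, Q (m₀ + Multiset.replicate k i)) :
    ∃ m, ¬ Q m ∧ ∀ i ∈ V, Q (i ::ₘ m) := by
  classical
  suffices ∃ m, m₀ ≤ m ∧ ¬ Q m ∧ ∀ i ∈ V, Q (i ::ₘ m) from this.imp fun _ => And.right
  induction V using Finset.induction_on with
  | empty => exact ⟨m₀, le_rfl, hm₀, by simp⟩
  | insert j V _ ih =>
    obtain ⟨m, hm₀m, hm, hV'⟩ := ih fun i hi => hV i (Finset.mem_insert_of_mem hi)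
    obtain ⟨k, hk⟩ := hV j (Finset.mem_insert_self j V)
    obtain ⟨n, hn, hjn⟩ := exists_not_and_cons_of_add_replicate hm j (hQ (by gcongr) hk)
    refine ⟨m + Multiset.replicate n j, hm₀m.trans (Multiset.le_add_right _ _), hn, ?_⟩
    intro i hi
    rcases Finset.mem_insert.mp hi with rfl | hi
    · exact hjn
    · exact hQ (Multiset.cons_le_cons i (Multiset.le_add_right _ _)) (hV' i hi)

section DecidableEq

variable [DecidableEq τ]

open Pointwise in
theorem coverSq_toMultiset_iff {E : Finset (Finset τ)} {u : τ →₀ ℕ} :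
    CoverSq E (toMultiset u) ↔ ∃ w ∈ coverExponents E + coverExponents E, w ≤ u := by
  simp only [Set.mem_add, coverExponents, Set.mem_ofPred_eq]
  constructor
  · rintro ⟨C, D, hC, hD, hle⟩
    refine ⟨_, ⟨Multiset.toFinsupp C.val, ?_, Multiset.toFinsupp D.val, ?_, rfl⟩, ?_⟩
    · rwa [Multiset.toFinsupp_support, Finset.val_toFinset]
    · rwa [Multiset.toFinsupp_support, Finset.val_toFinset]
    · rw [← Multiset.toFinsupp_add, ← Finsupp.coe_orderIsoMultiset_symm, OrderIso.symm_apply_le]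
      exact hle
  · rintro ⟨_, ⟨c, hc, d, hd, rfl⟩, hle⟩
    refine ⟨c.support, d.support, hc, hd, ?_⟩
    have hval : ∀ w : τ →₀ ℕ, w.support.val ≤ toMultiset w := fun w => by
      rw [← Finsupp.toFinset_toMultiset, Multiset.toFinset_val]; exact Multiset.dedup_le _
    calc c.support.val + d.support.val ≤ toMultiset c + toMultiset d := add_le_add (hval c) (hval d)
      _ = toMultiset (c + d) := (Finsupp.toMultiset_add c d).symm
      _ ≤ toMultiset u := by rw [← Finsupp.coe_orderIsoMultiset]; exact OrderIso.monotone _ hle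

theorem mem_coverIdeal_sq_iff {E : Finset (Finset τ)} {f : MvPolynomial τ K} :
    f ∈ coverIdeal K E ^ 2 ↔ ∀ u ∈ f.support, CoverSq E (toMultiset u) := by
  simp only [coverIdeal_eq_span, span_monomial_image_sq, mem_ideal_span_monomial_image,
    coverSq_toMultiset_iff]

theorem monomial_mem_coverIdeal_sq_iff {E : Finset (Finset τ)} {m : Multiset τ} :
    monomial (Multiset.toFinsupp m) (1 : K) ∈ coverIdeal K E ^ 2 ↔ CoverSq E m := by
  classical
  simp [mem_coverIdeal_sq_iff, support_monomial]

theorem exists_isSocleMonomial_of_isAssociatedPrime {E : Finset (Finset τ)} {V : Finset τ}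
    (h : IsAssociatedPrime (primeOf K V) (MvPolynomial τ K ⧸ coverIdeal K E ^ 2)) :
    ∃ m, IsSocleMonomial E V m := by
  obtain ⟨hprime, x, hx⟩ := h
  obtain ⟨f, rfl⟩ := Ideal.Quotient.mk_surjective x
  have hf : f ∉ coverIdeal K E ^ 2 := fun hf => hprime.ne_top <| by
    rw [Ideal.eq_top_iff_one, hx]
    exact Ideal.le_radical (mem_colon_bot_quotient_mk_iff.mpr (by rwa [one_mul]))
  simp only [mem_coverIdeal_sq_iff, not_forall] at hf
  obtain ⟨u, hu, hnot⟩ := hf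
  refine exists_not_and_forall_cons (coverSq_mono E) hnot V fun i hi => ?_
  have hXi : X i ∈ primeOf K V := Ideal.subset_span ⟨i, hi, rfl⟩
  rw [hx] at hXi
  obtain ⟨n, hn⟩ := hXi
  have hmem := mem_coverIdeal_sq_iff.mp (mem_colon_bot_quotient_mk_iff.mp hn)
    (u + Finsupp.single i n) (by
      rwa [mul_comm, X_pow_eq_monomial, mem_support_iff, coeff_mul_monomial, mul_one,
        ← mem_support_iff])
  refine ⟨n, ?_⟩
  rwa [Finsupp.toMultiset_add, Finsupp.toMultiset_single, Multiset.nsmul_singleton] at hmem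

theorem isAssociatedPrime_of_isSocleMonomial [Fintype τ] {E : Finset (Finset τ)}
    {m : Multiset τ} (h : IsSocleMonomial E Finset.univ m) :
    IsAssociatedPrime (primeOf K (Finset.univ : Finset τ))
      (MvPolynomial τ K ⧸ coverIdeal K E ^ 2) := by
  have hprime : (primeOf K (Finset.univ : Finset τ)).IsPrime :=
    primeOf_univ_eq_ker (τ := τ) (K := K) ▸ RingHom.ker_isPrime _
  refine ⟨hprime, Ideal.Quotient.mk _ (monomial (Multiset.toFinsupp m) 1), ?_⟩
  rw [← hprime.radical]
  congr 1
  ext r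
  rw [mem_colon_bot_quotient_mk_iff]
  constructor
  · intro hr
    have hle : primeOf K Finset.univ ≤
        (coverIdeal K E ^ 2).colon {monomial (Multiset.toFinsupp m) (1 : K)} := by
      refine Ideal.span_le.mpr ?_
      rintro _ ⟨i, -, rfl⟩
      dsimp only
      rw [SetLike.mem_coe, Submodule.mem_colon_singleton, smul_eq_mul,
        ← pow_one (X i : MvPolynomial τ K), ← monomial_single_add, ← Multiset.toFinsupp_singleton,
        ← Multiset.toFinsupp_add, Multiset.singleton_add, monomial_mem_coverIdeal_sq_iff]
      exact h.2 i (Finset.mem_univ i)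
    exact Submodule.mem_colon_singleton.mp (hle hr)
  · intro hr
    rw [primeOf_univ_eq_ker, RingHom.mem_ker, constantCoeff_eq]
    by_contra h0
    have hsupp : Multiset.toFinsupp m ∈ (r * monomial (Multiset.toFinsupp m) 1).support := by
      simpa [mem_support_iff, coeff_mul_monomial'] using h0
    have := mem_coverIdeal_sq_iff.mp hr _ hsupp
    exact h.1 (by rwa [Multiset.toFinsupp_toMultiset] at this)

theorem IsCover.inter {E : Finset (Finset τ)} {C W : Finset τ} (hC : IsCover E C)
    (hEW : ∀ e ∈ E, e ⊆ W) : IsCover E (C ∩ W) := fun e he =>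
  (hC e he).imp fun _ ⟨hve, hvC⟩ => ⟨hve, Finset.mem_inter.mpr ⟨hvC, hEW e he hve⟩⟩

theorem IsCover.erase {E : Finset (Finset τ)} {C : Finset τ} {u : τ} (hC : IsCover E C)
    (hu : ∀ e ∈ E, u ∈ e → ∃ v ∈ e, v ∈ C ∧ v ≠ u) : IsCover E (C.erase u) := by
  intro e he
  obtain ⟨v, hve, hvC⟩ := hC e he
  by_cases hvu : v = u
  · obtain ⟨w, hwe, hwC, hwu⟩ := hu e he (hvu ▸ hve)
    exact ⟨w, hwe, Finset.mem_erase.mpr ⟨hwu, hwC⟩⟩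
  · exact ⟨v, hve, Finset.mem_erase.mpr ⟨hvu, hvC⟩⟩

theorem IsSocleMonomial.count_le_one {E : Finset (Finset τ)} {W : Finset τ} {m : Multiset τ}
    (h : IsSocleMonomial E W m) {x : τ} (hx : x ∈ W) : m.count x ≤ 1 := by
  by_contra! hx2
  obtain ⟨C, D, hC, hD, hle⟩ := h.2 x hx
  refine h.1 ⟨C, D, hC, hD, Multiset.le_iff_count.mpr fun y => ?_⟩
  have hy := Multiset.le_iff_count.mp hle y
  have hCy := Multiset.nodup_iff_count_le_one.mp C.nodup y
  have hDy := Multiset.nodup_iff_count_le_one.mp D.nodup y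
  rw [Multiset.count_add] at hy ⊢
  rw [Multiset.count_cons] at hy
  split_ifs at hy with hyx
  · subst hyx; omega
  · omega

theorem IsSocleMonomial.exists_finset {E : Finset (Finset τ)} {W : Finset τ} {m : Multiset τ}
    (hEW : ∀ e ∈ E, e ⊆ W) (h : IsSocleMonomial E W m) :
    ∃ A ⊆ W, IsSocleMonomial E W A.val := by
  have hcount : ∀ (s : Finset τ) x, s.val.count x = if x ∈ s then 1 else 0 :=
    fun s _ => Multiset.count_eq_of_nodup s.nodup
  refine ⟨W.filter (· ∈ m), Finset.filter_subset _ _,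
    fun ⟨C, D, hC, hD, hle⟩ => h.1 ⟨C, D, hC, hD, hle.trans ?_⟩, fun i hi => ?_⟩
  · exact (Multiset.le_iff_subset (Finset.nodup _)).mpr fun x hx => (Finset.mem_filter.mp hx).2
  · obtain ⟨C, D, hC, hD, hle⟩ := h.2 i hi
    refine ⟨C ∩ W, D ∩ W, hC.inter hEW, hD.inter hEW, Multiset.le_iff_count.mpr fun x => ?_⟩
    have hx := Multiset.le_iff_count.mp hle x
    by_cases hxW : x ∈ W
    · have hm := h.count_le_one hxW
      have hpos : x ∈ m ↔ 0 < m.count x := Multiset.count_pos.symm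
      simp only [Multiset.count_add, Multiset.count_cons, hcount, Finset.mem_inter,
        Finset.mem_filter, hxW, and_true, true_and, hpos] at hx ⊢
      split_ifs at hx ⊢ <;> omega
    · simp [hxW]

theorem coverSq_val_of_disjoint {E : Finset (Finset τ)} {A C D : Finset τ} (hC : IsCover E C)
    (hD : IsCover E D) (hCD : Disjoint C D) (hA : C ∪ D ⊆ A) : CoverSq E A.val :=
  ⟨C, D, hC, hD, by
    rw [← Finset.disjUnion_val C D hCD, Finset.val_le_iff, Finset.disjUnion_eq_union]
    exact hA⟩

section ValAddLeCons

variable {A C D : Finset τ} {i : τ}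

theorem subset_insert_of_val_add_le_cons (h : C.val + D.val ≤ i ::ₘ A.val) :
    C ∪ D ⊆ insert i A := fun x hx => by
  simpa using Multiset.mem_of_le h (Multiset.mem_add.mpr (Finset.mem_union.mp hx))

theorem eq_of_mem_of_val_add_le_cons (h : C.val + D.val ≤ i ::ₘ A.val) {x : τ} (hxC : x ∈ C)
    (hxD : x ∈ D) : x = i := by
  by_contra hxi
  have hx := Multiset.le_iff_count.mp h x
  have hA := Multiset.nodup_iff_count_le_one.mp A.nodup x
  rw [Multiset.count_add, Multiset.count_cons, if_neg hxi,
    Multiset.count_eq_one_of_mem C.nodup hxC, Multiset.count_eq_one_of_mem D.nodup hxD] at hx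
  omega

theorem mem_of_val_add_le_cons (h : C.val + D.val ≤ i ::ₘ A.val) {x : τ} (hx : x ∈ C ∪ D)
    (hxi : x ≠ i) : x ∈ A :=
  (Finset.mem_insert.mp (subset_insert_of_val_add_le_cons h hx)).resolve_left hxi

theorem coverSq_of_erase {E : Finset (Finset τ)} (h : C.val + D.val ≤ i ::ₘ A.val)
    (hC : IsCover E (C.erase i)) (hD : IsCover E (D.erase i)) : CoverSq E A.val := by
  refine coverSq_val_of_disjoint hC hD (Finset.disjoint_left.mpr fun x hxC hxD => ?_)
    fun x hx => ?_
  · exact Finset.ne_of_mem_erase hxC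
      (eq_of_mem_of_val_add_le_cons h (Finset.mem_of_mem_erase hxC) (Finset.mem_of_mem_erase hxD))
  · rcases Finset.mem_union.mp hx with hx | hx
    · exact mem_of_val_add_le_cons h (Finset.mem_union_left _ (Finset.mem_of_mem_erase hx))
        (Finset.ne_of_mem_erase hx)
    · exact mem_of_val_add_le_cons h (Finset.mem_union_right _ (Finset.mem_of_mem_erase hx))
        (Finset.ne_of_mem_erase hx)

theorem coverSq_of_exchange {E : Finset (Finset τ)} (h : C.val + D.val ≤ i ::ₘ A.val)
    (hC : IsCover E C) (hD : IsCover E D) (hiA : i ∈ A) {z : τ} (hzA : z ∈ A) (hzD : z ∉ D)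
    (hzi : z ≠ i) (hz : ∀ e ∈ E, i ∈ e → z ∈ e) : CoverSq E A.val := by
  have hsub : C ∪ D ⊆ A := Finset.insert_eq_of_mem hiA ▸ subset_insert_of_val_add_le_cons h
  have hC' : IsCover E (insert z (C.erase i)) := by
    rw [← Finset.erase_insert_of_ne hzi]
    exact (hC.mono (Finset.subset_insert z C)).erase
      fun e he hie => ⟨z, hz e he hie, Finset.mem_insert_self z C, hzi⟩
  refine coverSq_val_of_disjoint hC' hD (Finset.disjoint_left.mpr fun x hx hxD => ?_)
    (Finset.union_subset (Finset.insert_subset hzA ?_) (Finset.union_subset_right hsub))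
  · rcases Finset.mem_insert.mp hx with rfl | hx
    · exact hzD hxD
    · exact Finset.ne_of_mem_erase hx
        (eq_of_mem_of_val_add_le_cons h (Finset.mem_of_mem_erase hx) hxD)
  · exact (Finset.erase_subset i C).trans (Finset.union_subset_left hsub)

end ValAddLeCons

theorem IsSocleMonomial.one_lt_card_inter {E : Finset (Finset τ)} {V A e : Finset τ}
    (hA : IsSocleMonomial E V A.val) (he : e ∈ E) {j : τ} (hj : j ∈ V) (hje : j ∉ e) :
    1 < (e ∩ A).card := by
  obtain ⟨C, D, hC, hD, hle⟩ := hA.2 j hj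
  obtain ⟨x, hxe, hxC⟩ := hC e he
  obtain ⟨y, hye, hyD⟩ := hD e he
  have hxj : x ≠ j := by rintro rfl; exact hje hxe
  refine Finset.one_lt_card.mpr ⟨x, Finset.mem_inter.mpr ⟨hxe, ?_⟩, y,
    Finset.mem_inter.mpr ⟨hye, ?_⟩,
    fun hxy => hxj (eq_of_mem_of_val_add_le_cons hle hxC (hxy ▸ hyD))⟩
  · exact mem_of_val_add_le_cons hle (Finset.mem_union_left _ hxC) hxj
  · exact mem_of_val_add_le_cons hle (Finset.mem_union_right _ hyD) (by rintro rfl; exact hje hye)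

theorem IsSocleMonomial.subset_of_one_lt_card (H : FinHypergraph τ) {V' A : Finset τ}
    (hint : ∀ e ∈ H.E, ∀ f ∈ H.E, e ≠ f → e ∩ f ⊆ V') (hE : 1 < H.E.card) (hAV : A ⊆ H.V)
    (hA : IsSocleMonomial H.E H.V A.val) : A ⊆ V' := by
  intro u huA
  by_contra huV'
  -- `u` lies on at most one edge, since two edges meet only inside `V'`
  obtain ⟨e, he, hue⟩ : ∃ e ∈ H.E, ∀ f ∈ H.E, u ∈ f → f = e := by
    by_cases hex : ∃ e ∈ H.E, u ∈ e
    · obtain ⟨e, he, hu⟩ := hex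
      exact ⟨e, he, fun f hf huf => by_contra fun hfe =>
        huV' (hint f hf e he hfe (Finset.mem_inter.mpr ⟨huf, hu⟩))⟩
    · obtain ⟨e, he⟩ := hA.nonempty
      exact ⟨e, he, fun f hf huf => absurd ⟨f, hf, huf⟩ hex⟩
  obtain ⟨f, hf, hfe⟩ := Finset.exists_mem_ne hE e
  obtain ⟨j, hjf, hje⟩ := Finset.not_subset.mp fun hfe' => hfe (H.simple f hf e he hfe')
  obtain ⟨z, hz, hzu⟩ :=
    Finset.exists_mem_ne (hA.one_lt_card_inter he (H.edge_sub f hf hjf) hje) u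
  obtain ⟨hze, hzA⟩ := Finset.mem_inter.mp hz
  have hzE : ∀ f ∈ H.E, u ∈ f → z ∈ f := fun f hf huf => hue f hf huf ▸ hze
  obtain ⟨C, D, hC, hD, hle⟩ := hA.2 u (hAV huA)
  by_cases hzD : z ∈ D
  · have hzC : z ∉ C := fun hzC => hzu (eq_of_mem_of_val_add_le_cons hle hzC hzD)
    exact hA.1 (coverSq_of_exchange (by rwa [add_comm]) hD hC huA hzA hzC hzu hzE)
  · exact hA.1 (coverSq_of_exchange hle hC hD huA hzA hzD hzu hzE)

theorem IsSocleMonomial.injOn_inter (H : FinHypergraph τ) {V' A : Finset τ}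
    (hint : ∀ e ∈ H.E, ∀ f ∈ H.E, e ≠ f → e ∩ f ⊆ V') (hAV' : A ⊆ V')
    (hA : IsSocleMonomial H.E H.V A.val) :
    Set.InjOn (· ∩ V') H.E := by
  intro e₁ h₁ e₂ h₂ heq
  simp only at heq
  by_contra hne
  obtain ⟨i, hi₁, hi₂⟩ := Finset.not_subset.mp fun h => hne (H.simple e₁ h₁ e₂ h₂ h)
  have hiV' : i ∉ V' := fun hi =>
    hi₂ (Finset.mem_inter.mp ((heq ▸ Finset.mem_inter.mpr ⟨hi₁, hi⟩ : i ∈ e₂ ∩ V'))).1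
  obtain ⟨C, D, hC, hD, hle⟩ := hA.2 i (H.edge_sub e₁ h₁ hi₁)
  -- only `e₁` passes through `i`, and the vertex covering `e₂` lies in `e₂ ∩ V' = e₁ ∩ V'`
  have herase : ∀ B ⊆ C ∪ D, IsCover H.E B → IsCover H.E (B.erase i) := by
    refine fun B hB hcov => hcov.erase fun f hf hif => ?_
    have hf₁ : f = e₁ := by_contra fun h =>
      hiV' (hint f hf e₁ h₁ h (Finset.mem_inter.mpr ⟨hif, hi₁⟩))
    obtain ⟨v, hv₂, hvB⟩ := hcov e₂ h₂
    have hvi : v ≠ i := by rintro rfl; exact hi₂ hv₂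
    have hvV' : v ∈ V' := hAV' (mem_of_val_add_le_cons hle (hB hvB) hvi)
    have hv₁ : v ∈ e₁ ∩ V' := heq ▸ Finset.mem_inter.mpr ⟨hv₂, hvV'⟩
    exact ⟨v, hf₁ ▸ (Finset.mem_inter.mp hv₁).1, hvB, hvi⟩
  exact hA.1 (coverSq_of_erase hle (herase C Finset.subset_union_left hC)
    (herase D Finset.subset_union_right hD))

theorem IsSocleMonomial.subset_of_eq_singleton {e V A : Finset τ}
    (hA : IsSocleMonomial {e} V A.val) : V ⊆ e := by
  intro j hj
  by_contra hje
  obtain ⟨x, hx, y, hy, hxy⟩ :=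
    Finset.one_lt_card.mp (hA.one_lt_card_inter (Finset.mem_singleton_self e) hj hje)
  refine hA.1 (coverSq_val_of_disjoint (C := {x}) (D := {y}) ?_ ?_
    (Finset.disjoint_singleton.mpr hxy) ?_)
  · exact isCover_singleton.mpr ⟨x, (Finset.mem_inter.mp hx).1, Finset.mem_singleton_self x⟩
  · exact isCover_singleton.mpr ⟨y, (Finset.mem_inter.mp hy).1, Finset.mem_singleton_self y⟩
  · simp [Finset.insert_subset_iff, (Finset.mem_inter.mp hx).2, (Finset.mem_inter.mp hy).2]

theorem exists_isSocleMonomial_of_shadow (H : FinHypergraph τ) {V' A : Finset τ}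
    (hV' : V' ⊆ H.V) (hne : ∀ e ∈ H.E, (e ∩ V').Nonempty)
    (hint : ∀ e ∈ H.E, ∀ f ∈ H.E, e ≠ f → e ∩ f ⊆ V') (hAV : A ⊆ H.V)
    (hA : IsSocleMonomial H.E H.V A.val) :
    ∃ B ⊆ V', IsSocleMonomial H.E V' B.val ∧ Set.InjOn (· ∩ V') H.E := by
  by_cases hE : 1 < H.E.card
  · have hAV' := hA.subset_of_one_lt_card H hint hE hAV
    exact ⟨A, hAV', hA.mono hV', hA.injOn_inter H hint hAV'⟩
  · obtain ⟨e, he⟩ :=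
      (Finset.card_eq_one (s := H.E)).mp (by have := hA.nonempty.card_pos; omega)
    rw [he] at hA hne ⊢
    obtain ⟨w, hw⟩ := hne e (Finset.mem_singleton_self e)
    obtain ⟨hwe, hwV'⟩ := Finset.mem_inter.mp hw
    exact ⟨{w}, Finset.singleton_subset_iff.mpr hwV',
      isSocleMonomial_singleton (hV'.trans hA.subset_of_eq_singleton) hwe,
      by simp⟩

section Subtype

variable {E : Finset (Finset τ)} {s : Finset τ}

theorem map_val_subtype_val {B : Finset τ} (hB : B ⊆ s) :
    (B.subtype (· ∈ s)).val.map Subtype.val = B.val :=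
  congrArg Finset.val (Finset.subtype_map_of_mem hB)

theorem isCover_image_subtype_iff {C : Finset s} :
    IsCover (E.image (·.subtype (· ∈ s))) C ↔
      IsCover E (C.map (Function.Embedding.subtype _)) := by
  simp [IsCover]

theorem coverSq_image_subtype_iff {m : Multiset s} :
    CoverSq (E.image (·.subtype (· ∈ s))) m ↔ CoverSq E (m.map Subtype.val) := by
  constructor
  · rintro ⟨C, D, hC, hD, hle⟩
    refine ⟨_, _, isCover_image_subtype_iff.mp hC, isCover_image_subtype_iff.mp hD, ?_⟩
    simpa only [Finset.map_val, Multiset.map_add, Function.Embedding.coe_subtype] using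
      Multiset.map_le_map hle
  · rintro ⟨C, D, hC, hD, hle⟩
    have hsub : ∀ B : Finset τ, B.val ≤ m.map Subtype.val → B ⊆ s := fun B hB x hx => by
      obtain ⟨y, -, rfl⟩ := Multiset.mem_map.mp (Multiset.mem_of_le hB hx)
      exact y.2
    have hCs := hsub C ((Multiset.le_add_right _ _).trans hle)
    have hDs := hsub D ((Multiset.le_add_left _ _).trans hle)
    refine ⟨C.subtype (· ∈ s), D.subtype (· ∈ s), ?_, ?_, ?_⟩
    · rwa [isCover_image_subtype_iff, Finset.subtype_map_of_mem hCs]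
    · rwa [isCover_image_subtype_iff, Finset.subtype_map_of_mem hDs]
    · rwa [← Multiset.map_le_map_iff Subtype.val_injective, Multiset.map_add,
        map_val_subtype_val hCs, map_val_subtype_val hDs]

theorem IsSocleMonomial.subtype {m : Multiset s} (h : IsSocleMonomial E s (m.map Subtype.val)) :
    IsSocleMonomial (E.image (·.subtype (· ∈ s))) Finset.univ m := by
  refine ⟨fun hm => h.1 (coverSq_image_subtype_iff.mp hm), fun i _ => ?_⟩
  rw [coverSq_image_subtype_iff, Multiset.map_cons]
  exact h.2 i i.2

theorem image_subtype_image_inter :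
    (E.image (· ∩ s)).image (·.subtype (· ∈ s)) = E.image (·.subtype (· ∈ s)) := by
  rw [Finset.image_image]
  congr 1
  ext e x
  simp

end Subtype

theorem smallCover_eq_coverIdeal (V' : Finset τ) (E' : Finset (Finset τ)) :
    smallCover K V' E' = coverIdeal K (E'.image (·.subtype (· ∈ V'))) := by
  rw [coverIdeal, Finset.iInf_finset_image]
  rfl

theorem IsShadow.eq_image_inter {H : FinHypergraph τ} {V' : Finset τ} {E' : Finset (Finset τ)}
    (hsh : IsShadow H V' E') (hinj : Set.InjOn (· ∩ V') H.E) :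
    E' = H.E.image (· ∩ V') := by
  obtain ⟨-, -, -, -, hcard, himg⟩ := hsh
  refine (Finset.eq_of_subset_of_card_le (Finset.image_subset_iff.mpr himg) ?_).symm
  rw [Finset.card_image_of_injOn hinj, hcard]

end DecidableEq

end

theorem maximal_assoc_shadow_of_maximal_assoc {σ K : Type*} [DecidableEq σ] [Field K]
    (H : FinHypergraph σ) (V' : Finset σ) (E' : Finset (Finset σ)) (hsh : IsShadow H V' E')
    (hint : ∀ e ∈ H.E, ∀ f ∈ H.E, e ≠ f → e ∩ f ⊆ V')
    (h : IsAssociatedPrime (primeOf K H.V) (MvPolynomial σ K ⧸ (coverIdeal K H.E) ^ 2)) :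
    IsAssociatedPrime (primeOf K V'.attach)
      (MvPolynomial {x : σ // x ∈ V'} K ⧸ (smallCover K V' E') ^ 2) := by
  obtain ⟨m, hm⟩ := exists_isSocleMonomial_of_isAssociatedPrime h
  obtain ⟨A, hAV, hA⟩ := hm.exists_finset H.edge_sub
  obtain ⟨B, hBV', hB, hinj⟩ := exists_isSocleMonomial_of_shadow H hsh.1
    (fun e he => hsh.2.2.1 _ (hsh.2.2.2.2.2 e he)) hint hAV hA
  rw [smallCover_eq_coverIdeal, hsh.eq_image_inter hinj, image_subtype_image_inter,
    ← Finset.univ_eq_attach]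
  refine isAssociatedPrime_of_isSocleMonomial (m := (B.subtype (· ∈ V')).val) (.subtype ?_)
  rwa [map_val_subtype_val hBV']
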